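/- Let G be a graph, let u, v be adjacent vertices of G, and let G_{u→v} be the Kelmans transformation of G from u to v. Then the number of vertices in a longest path of G_{u→v} is at most the number of vertices in a longest path of G, i.e., p(G_{u→v}) ≤ p(G). -/

import Mathlib

variable {V : Type*}

/-- `kelmansP G u v = P_v(u)`: the neighbors of `u` other than `v` that are
not neighbors of `v`. -/
def kelmansP (G : SimpleGraph V) (u v : V) : Set V :=
  {w | G.Adj u w ∧ w ≠ v ∧ ¬ G.Adj v w}

/-- The Kelmans transformation `G_{u→v}`: delete the edges from `u` to the
vertices of `P_v(u)` and add edges from `v` to the vertices of `P_v(u)`. -/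
def kelmans (G : SimpleGraph V) (u v : V) : SimpleGraph V where
  Adj x y :=
    (G.Adj x y ∧ ¬(x = u ∧ y ∈ kelmansP G u v) ∧ ¬(y = u ∧ x ∈ kelmansP G u v)) ∨
      (x = v ∧ y ∈ kelmansP G u v) ∨ (y = v ∧ x ∈ kelmansP G u v)
  symm := by
    constructor
    intro x y h
    rcases h with ⟨h1, h2, h3⟩ | h | h
    · exact Or.inl ⟨h1.symm, h3, h2⟩
    · exact Or.inr (Or.inr h)
    · exact Or.inr (Or.inl h)
  loopless := by
    constructor
    intro x h
    rcases h with ⟨h, -⟩ | ⟨rfl, -, h, -⟩ | ⟨rfl, -, h, -⟩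
    · exact G.irrefl h
    · exact h rfl
    · exact h rfl

/-- The circumference of a graph: the length of a longest cycle
(`0` if there is no cycle). -/
noncomputable def circumference (G : SimpleGraph V) : ℕ :=
  sSup {n | ∃ (u : V) (c : G.Walk u u), c.IsCycle ∧ c.length = n}

/-- The number of vertices of a longest path of `G`. -/
noncomputable def longestPathVerts (G : SimpleGraph V) : ℕ :=
  sSup {n | ∃ (u v : V) (p : G.Walk u v), p.IsPath ∧ p.length + 1 = n}

/-! In `G_{u→v}` every edge at `u` other than `uv` goes to a common neighbour of `u` and `v`,
and the edges of `G_{u→v}` not in `G` are the `vw` with `w ∈ P_v(u)`, each such `w` being a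
neighbour of `u` in `G`. So a path of `G_{u→v}` can fail to be a path of `G` only at its two
edges through `v`, and the other end of each of them is adjacent in `G` to `u` or to `v`.
If `u` is off the path, replace `v` by one of `u`, `uv`, `vu`. Otherwise write the path as
`A v B u D`: the first vertex of `D` and the last of `B` are common neighbours of `u` and `v`,
so after putting at the end of `A` whichever of `u`, `v` is adjacent to it and the other one
before `D`, the segment `B` fits in between, read forwards or backwards. -/

open List SimpleGraph

section

variable {G : SimpleGraph V} {u v x y : V} {l A B C D : List V}

theorem SimpleGraph.isChain_adj_reverse : l.reverse.IsChain G.Adj ↔ l.IsChain G.Adj := by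
  simp only [isChain_reverse, G.adj_comm]

theorem exists_perm_isChain_cons_append_singleton (hxy : G.Adj x y)
    (hB : (x :: B).IsChain G.Adj ∨ (y :: B).IsChain G.Adj)
    (hBx : (B ++ [x]).IsChain G.Adj) (hBy : (B ++ [y]).IsChain G.Adj) :
    ∃ B', B' ~ B ∧ (x :: B' ++ [y]).IsChain G.Adj := by
  rcases eq_or_ne B [] with rfl | hne
  · exact ⟨[], .refl _, isChain_pair.mpr hxy⟩
  rcases hB with hxB | hyB
  · exact ⟨B, .refl B, IsChain.append_overlap (l₁ := [x]) hxB hBy hne⟩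
  · refine ⟨B.reverse, reverse_perm B, ?_⟩
    simpa using isChain_adj_reverse.mpr (IsChain.append_overlap (l₁ := [y]) hyB hBx hne)

theorem exists_perm_isChain_of_swap_ends (huv : G.Adj u v)
    (hA : (A ++ [u]).IsChain G.Adj ∨ (A ++ [v]).IsChain G.Adj)
    (hB : (u :: B).IsChain G.Adj ∨ (v :: B).IsChain G.Adj)
    (hBu : (B ++ [u]).IsChain G.Adj) (hBv : (B ++ [v]).IsChain G.Adj)
    (hDu : (u :: D).IsChain G.Adj) (hDv : (v :: D).IsChain G.Adj) :
    ∃ l, l ~ A ++ v :: (B ++ u :: D) ∧ l.IsChain G.Adj := by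
  rcases hA with hAu | hAv
  · obtain ⟨B', hB', hc⟩ := exists_perm_isChain_cons_append_singleton huv hB hBu hBv
    refine ⟨A ++ u :: (B' ++ v :: D), ?_,
      isChain_split.mpr ⟨hAu, isChain_split.mpr ⟨hc, hDv⟩⟩⟩
    refine .append_left A ((perm_middle.cons u).trans ((Perm.swap v u _).trans ?_))
    exact (((hB'.append_right D).cons u).cons v).trans (perm_middle.symm.cons v)
  · obtain ⟨B', hB', hc⟩ := exists_perm_isChain_cons_append_singleton huv.symm hB.symm hBv hBu
    refine ⟨A ++ v :: (B' ++ u :: D), ?_,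
      isChain_split.mpr ⟨hAv, isChain_split.mpr ⟨hc, hDu⟩⟩⟩
    exact .append_left A (.cons v (hB'.append_right _))

theorem exists_subperm_pair_isChain_append (huv : G.Adj u v)
    (hA : (A ++ [u]).IsChain G.Adj ∨ (A ++ [v]).IsChain G.Adj)
    (hC : (u :: C).IsChain G.Adj ∨ (v :: C).IsChain G.Adj) :
    ∃ M, M ≠ [] ∧ M <+~ [u, v] ∧ (A ++ M ++ C).IsChain G.Adj := by
  rcases hA with hA | hA <;> rcases hC with hC | hC
  · exact ⟨[u], by simp, by simp, by simpa using isChain_split.mpr ⟨hA, hC⟩⟩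
  · exact ⟨[u, v], by simp, .refl _, by simpa using ⟨hA, huv, hC⟩⟩
  · exact ⟨[v, u], by simp, (Perm.swap _ _ _).subperm, by simpa using ⟨hA, huv.symm, hC⟩⟩
  · exact ⟨[v], by simp, by simp, by simpa using isChain_split.mpr ⟨hA, hC⟩⟩

theorem kelmans_adj_of_ne (h : (kelmans G u v).Adj x y) (hx : x ≠ v) (hy : y ≠ v) :
    G.Adj x y := by
  rcases h with ⟨h, -⟩ | ⟨rfl, -⟩ | ⟨rfl, -⟩
  exacts [h, absurd rfl hx, absurd rfl hy]

theorem adj_or_adj_of_kelmans_adj (h : (kelmans G u v).Adj v x) : G.Adj u x ∨ G.Adj v x := by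
  rcases h with ⟨h, -⟩ | ⟨-, h, -⟩ | ⟨rfl, -, h, -⟩
  exacts [.inr h, .inl h, absurd rfl h]

theorem adj_and_adj_of_kelmans_adj (huv : G.Adj u v) (h : (kelmans G u v).Adj u x)
    (hx : x ≠ v) : G.Adj u x ∧ G.Adj v x := by
  rcases h with ⟨h, hP, -⟩ | ⟨rfl, -⟩ | ⟨rfl, -⟩
  · exact ⟨h, by_contra fun hvx => hP ⟨rfl, h, hx, hvx⟩⟩
  · exact absurd rfl huv.ne
  · exact absurd rfl hx

theorem isChain_of_isChain_kelmans (hc : l.IsChain (kelmans G u v).Adj) (hv : v ∉ l) :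
    l.IsChain G.Adj :=
  hc.imp_of_mem_imp fun _ _ hx hy h => kelmans_adj_of_ne h (ne_of_mem_of_not_mem hx hv)
    (ne_of_mem_of_not_mem hy hv)

theorem isChain_cons_or_of_isChain_kelmans (hc : (v :: C).IsChain (kelmans G u v).Adj)
    (hv : v ∉ C) : (u :: C).IsChain G.Adj ∨ (v :: C).IsChain G.Adj := by
  have hC := isChain_of_isChain_kelmans hc.tail hv
  cases C with
  | nil => exact .inl (.singleton u)
  | cons c C => exact (adj_or_adj_of_kelmans_adj hc.rel).imp hC.cons_cons hC.cons_cons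

theorem isChain_append_or_of_isChain_kelmans (hc : (C ++ [v]).IsChain (kelmans G u v).Adj)
    (hv : v ∉ C) : (C ++ [u]).IsChain G.Adj ∨ (C ++ [v]).IsChain G.Adj := by
  rw [← isChain_adj_reverse, reverse_append] at hc
  simpa [← isChain_adj_reverse (l := C ++ _)] using
    isChain_cons_or_of_isChain_kelmans hc (by simpa using hv)

theorem isChain_cons_and_of_isChain_kelmans (huv : G.Adj u v)
    (hc : (u :: D).IsChain (kelmans G u v).Adj) (hv : v ∉ D) :
    (u :: D).IsChain G.Adj ∧ (v :: D).IsChain G.Adj := by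
  have hD := isChain_of_isChain_kelmans hc.tail hv
  cases D with
  | nil => exact ⟨.singleton u, .singleton v⟩
  | cons d D =>
    have hd : d ≠ v := ne_of_mem_of_not_mem mem_cons_self hv
    obtain ⟨hud, hvd⟩ := adj_and_adj_of_kelmans_adj huv hc.rel hd
    exact ⟨hD.cons_cons hud, hD.cons_cons hvd⟩

theorem isChain_append_and_of_isChain_kelmans (huv : G.Adj u v)
    (hc : (D ++ [u]).IsChain (kelmans G u v).Adj) (hv : v ∉ D) :
    (D ++ [u]).IsChain G.Adj ∧ (D ++ [v]).IsChain G.Adj := by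
  rw [← isChain_adj_reverse, reverse_append] at hc
  simpa [← isChain_adj_reverse (l := D ++ _)] using
    isChain_cons_and_of_isChain_kelmans huv hc (by simpa using hv)

theorem length_le_longestPathVerts [Finite V] (hc : l.IsChain G.Adj) (hn : l.Nodup) :
    l.length ≤ longestPathVerts G := by
  have := Fintype.ofFinite V
  rcases eq_or_ne l [] with rfl | hne
  · simp
  refine le_csSup ⟨Fintype.card V, ?_⟩ ⟨_, _, Walk.ofSupport l hne hc, ?_, ?_⟩
  · rintro _ ⟨_, _, p, hp, rfl⟩
    exact p.length_support ▸ hp.support_nodup.length_le_card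
  · rwa [Walk.isPath_def, Walk.support_ofSupport]
  · have := length_pos_iff.mpr hne
    simp only [Walk.length_ofSupport]
    omega

theorem length_le_longestPathVerts_of_kelmans_of_not_mem [Finite V] (huv : G.Adj u v)
    (hc : (A ++ v :: C).IsChain (kelmans G u v).Adj) (hn : (u :: (A ++ v :: C)).Nodup) :
    (A ++ v :: C).length ≤ longestPathVerts G := by
  obtain ⟨hvA, hvC⟩ : v ∉ A ∧ v ∉ C := by
    simpa using (nodup_middle.mp hn.of_cons).notMem
  rw [isChain_split] at hc
  obtain ⟨M, hM, hMuv, hMc⟩ := exists_subperm_pair_isChain_append huv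
    (isChain_append_or_of_isChain_kelmans hc.1 hvA) (isChain_cons_or_of_isChain_kelmans hc.2 hvC)
  obtain ⟨l', hperm, hl'⟩ : A ++ M ++ C <+~ u :: (A ++ v :: C) :=
    (((subperm_append_left A).mpr hMuv).append (Subperm.refl C)).trans
      (by simpa using perm_middle.subperm)
  calc (A ++ v :: C).length ≤ (A ++ M ++ C).length := by
        have := length_pos_iff.mpr hM
        simp only [length_append, length_cons]
        omega
    _ ≤ longestPathVerts G := length_le_longestPathVerts hMc (hperm.nodup_iff.mp (hn.sublist hl'))

theorem length_le_longestPathVerts_of_kelmans_of_mem [Finite V] (huv : G.Adj u v)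
    (hc : (A ++ v :: (B ++ u :: D)).IsChain (kelmans G u v).Adj)
    (hn : (A ++ v :: (B ++ u :: D)).Nodup) :
    (A ++ v :: (B ++ u :: D)).length ≤ longestPathVerts G := by
  obtain ⟨hvA, hvB, -, hvD⟩ : v ∉ A ∧ v ∉ B ∧ v ≠ u ∧ v ∉ D := by
    simpa using (nodup_middle.mp hn).notMem
  rw [isChain_split, isChain_cons_split] at hc
  obtain ⟨hA, hvBu, huD⟩ := hc
  obtain ⟨hDu, hDv⟩ := isChain_cons_and_of_isChain_kelmans huv huD hvD
  obtain ⟨hBu, hBv⟩ := isChain_append_and_of_isChain_kelmans huv hvBu.tail hvB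
  obtain ⟨l', hperm, hl'⟩ := exists_perm_isChain_of_swap_ends huv
    (isChain_append_or_of_isChain_kelmans hA hvA)
    (isChain_cons_or_of_isChain_kelmans (hvBu.left_of_append (l₂ := [u])) hvB) hBu hBv hDu hDv
  exact hperm.length_eq ▸ length_le_longestPathVerts hl' (hperm.nodup_iff.mpr hn)

theorem length_le_longestPathVerts_of_isChain_kelmans [Finite V] (huv : G.Adj u v)
    (hc : l.IsChain (kelmans G u v).Adj) (hn : l.Nodup) : l.length ≤ longestPathVerts G := by
  by_cases hv : v ∈ l
  swap
  · exact length_le_longestPathVerts (isChain_of_isChain_kelmans hc hv) hn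
  obtain ⟨A, C, rfl⟩ := append_of_mem hv
  by_cases hu : u ∈ A ++ v :: C
  swap
  · exact length_le_longestPathVerts_of_kelmans_of_not_mem huv hc (hn.cons hu)
  rcases mem_append.mp hu with huA | huC
  · obtain ⟨A₁, A₂, rfl⟩ := append_of_mem huA
    rw [← length_reverse]
    convert length_le_longestPathVerts_of_kelmans_of_mem huv
      (A := C.reverse) (B := A₂.reverse) (D := A₁.reverse)
      (by simpa using isChain_adj_reverse.mpr hc) (by simpa using nodup_reverse.mpr hn) using 2
    simp
  · obtain ⟨B, D, rfl⟩ := append_of_mem (mem_of_ne_of_mem huv.ne huC)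
    exact length_le_longestPathVerts_of_kelmans_of_mem huv hc hn

end

/-- The Kelmans transformation does not increase the number of vertices of a
longest path. -/
theorem longestPath_kelmans_le {V : Type*} [Fintype V] (G : SimpleGraph V)
    (u v : V) (huv : G.Adj u v) :
    longestPathVerts (kelmans G u v) ≤ longestPathVerts G := by
  refine csSup_le' ?_
  rintro _ ⟨_, _, p, hp, rfl⟩
  rw [← p.length_support]
  exact length_le_longestPathVerts_of_isChain_kelmans huv p.isChain_adj_support hp.support_nodup
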